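/- Let Φ : ℝ^n → ℝ be differentiable, bounded below, with ∇Φ Lipschitz with constant L, let γ > 0, β > 2L, and let X be either ℝ^n or the nonnegative orthant {x ∈ ℝ^n : xᵢ ≥ 0 for all i}. Let (x^k, y^k, z^k) be an ADMM_p sequence for these data. Then ‖y^k − y^{k+1}‖₂ → 0 as k → ∞. -/

import Mathlib

/-!
Along the iteration, `V k = h(x^{k+1}) + γ⁻¹ 𝓛_β(x^{k+1}, y^{k+1}, z^{k+1})`, with
`𝓛_β(x, y, z) = Φ y + ⟪z, x - y⟫ + β/2 ‖x - y‖²`, decreases by at least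
`γ⁻¹ ((β - L)/2 - L²/β) ‖y^{k+1} - y^{k+2}‖²`, a positive multiple once `β > 2L`. The `x`-step
does not increase it; the `y`-step decreases it by `(β - L)/2 ‖Δy‖²` (descent lemma plus the
optimality condition `∇Φ(y^{k+1}) = z^{k+1}`); the dual step increases it by
`β⁻¹ ‖Δz‖² ≤ (L²/β) ‖Δy‖²`, because `Δz = Δ∇Φ(y)`. As `h ≥ 0` and `𝓛_β(x, y, ∇Φ y) ≥ Φ x`
for `β ≥ L`, `V` is bounded below by `γ⁻¹ inf Φ`, so `∑ ‖Δy‖² < ∞`.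
-/

noncomputable section
open Classical

/-- The ℓ¹ norm on ℝ^n. -/
def l1 {n : ℕ} (x : EuclideanSpace ℝ (Fin n)) : ℝ := ∑ i, |x i|

/-- The ratio ‖x‖₁/‖x‖₂ with the convention that it equals 1 at the origin. -/
def ratio {n : ℕ} (x : EuclideanSpace ℝ (Fin n)) : ℝ :=
  if x = 0 then 1 else l1 x / ‖x‖

/-- `(x, y, z)` is an ADMM_p sequence for data `(β, γ, X, Φ)`:
at every step, `x^{k+1}` globally minimizes the proximal subproblem of the ratio `‖·‖₁/‖·‖₂`
over `X`, `y^{k+1}` globally minimizes the `Φ`-subproblem, and `z` is updated by the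
multiplier rule. -/
def ADMMpSeq {n : ℕ} (β γ : ℝ) (X : Set (EuclideanSpace ℝ (Fin n)))
    (Φ : EuclideanSpace ℝ (Fin n) → ℝ)
    (x y z : ℕ → EuclideanSpace ℝ (Fin n)) : Prop :=
  ∀ k : ℕ,
    (x (k + 1) ∈ X ∧ ∀ u ∈ X,
      ratio (x (k + 1)) + β / (2 * γ) * ‖x (k + 1) - (y k - β⁻¹ • z k)‖ ^ 2 ≤
        ratio u + β / (2 * γ) * ‖u - (y k - β⁻¹ • z k)‖ ^ 2) ∧
    (∀ u : EuclideanSpace ℝ (Fin n),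
      Φ (y (k + 1)) + β / 2 * ‖y (k + 1) - x (k + 1) - β⁻¹ • z k‖ ^ 2 ≤
        Φ u + β / 2 * ‖u - x (k + 1) - β⁻¹ • z k‖ ^ 2) ∧
    z (k + 1) = z k + β • (x (k + 1) - y (k + 1))

open InnerProductSpace RealInnerProductSpace Filter Topology Set Finset

section AugmentedLagrangian
variable {E : Type*} [NormedAddCommGroup E] [InnerProductSpace ℝ E]

def augLagrangian (Φ : E → ℝ) (β : ℝ) (x y z : E) : ℝ :=
  Φ y + ⟪z, x - y⟫ + β / 2 * ‖x - y‖ ^ 2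

variable {Φ : E → ℝ} {β : ℝ}

theorem augLagrangian_eq (hβ : β ≠ 0) (x y z : E) :
    augLagrangian Φ β x y z = Φ y + β / 2 * ‖y - x - β⁻¹ • z‖ ^ 2 - ‖z‖ ^ 2 / (2 * β) := by
  rw [augLagrangian, norm_sub_sq_real (y - x), real_inner_smul_right, norm_smul, mul_pow,
    Real.norm_eq_abs, sq_abs, norm_sub_rev y x, ← neg_sub x y, inner_neg_left,
    real_inner_comm z]
  field_simp
  ring

theorem augLagrangian_add_smul_sub (x y z : E) :
    augLagrangian Φ β x y (z + β • (x - y)) = augLagrangian Φ β x y z + β * ‖x - y‖ ^ 2 := by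
  rw [augLagrangian, augLagrangian, inner_add_left, real_inner_smul_left,
    real_inner_self_eq_norm_sq]
  ring

theorem smul_add_inv_smul_sub (hβ : β ≠ 0) {x y z : E} :
    β • (x + β⁻¹ • z - y) = z + β • (x - y) := by
  rw [smul_sub, smul_add, smul_smul, mul_inv_cancel₀ hβ, one_smul, smul_sub]
  abel

theorem add_inv_mul_augLagrangian_le {h : E → ℝ} {γ : ℝ} (hβ : β ≠ 0) {x x' y z : E}
    (hmin : h x' + β / (2 * γ) * ‖x' - (y - β⁻¹ • z)‖ ^ 2 ≤
      h x + β / (2 * γ) * ‖x - (y - β⁻¹ • z)‖ ^ 2) :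
    h x' + γ⁻¹ * augLagrangian Φ β x' y z ≤ h x + γ⁻¹ * augLagrangian Φ β x y z := by
  have hsplit : ∀ w, γ⁻¹ * augLagrangian Φ β w y z =
      β / (2 * γ) * ‖w - (y - β⁻¹ • z)‖ ^ 2 + γ⁻¹ * (Φ y - ‖z‖ ^ 2 / (2 * β)) := by
    intro w
    rw [augLagrangian_eq hβ, show y - w - β⁻¹ • z = -(w - (y - β⁻¹ • z)) by abel, norm_neg]
    ring
  rw [hsplit, hsplit]
  linarith

end AugmentedLagrangian

section LipschitzGradient
variable {E : Type*} [NormedAddCommGroup E] [InnerProductSpace ℝ E] [CompleteSpace E]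
  {Φ : E → ℝ} {g : E → E} {L : ℝ}

theorem abs_sub_sub_inner_le_of_lipschitz_gradient (hΦ : ∀ x, HasGradientAt Φ (g x) x)
    (hg : ∀ x y, ‖g x - g y‖ ≤ L * ‖x - y‖) (a b : E) :
    |Φ b - Φ a - ⟪g a, b - a⟫| ≤ L / 2 * ‖b - a‖ ^ 2 := by
  obtain ⟨d, rfl⟩ : ∃ d, b = a + d := ⟨b - a, by abel⟩
  have hline : ∀ t : ℝ, HasDerivAt (fun s : ℝ => Φ (a + s • d) - Φ a - s * ⟪g a, d⟫)
      (⟪g (a + t • d) - g a, d⟫) t := by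
    intro t
    have hpath : HasDerivAt (fun s : ℝ => a + s • d) d t := by
      simpa using ((hasDerivAt_id t).smul_const d).const_add a
    refine ((((hΦ _).hasFDerivAt.comp_hasDerivAt t hpath).sub_const (Φ a)).sub
      ((hasDerivAt_id t).mul_const ⟪g a, d⟫)).congr_deriv ?_
    simp [inner_sub_left]
  have hbound : ∀ t ∈ Ico (0 : ℝ) 1, ‖⟪g (a + t • d) - g a, d⟫‖ ≤ L * ‖d‖ ^ 2 * t := by
    intro t ht
    calc ‖⟪g (a + t • d) - g a, d⟫‖ ≤ ‖g (a + t • d) - g a‖ * ‖d‖ := norm_inner_le_norm _ _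
      _ ≤ L * ‖t • d‖ * ‖d‖ := by gcongr; simpa using hg (a + t • d) a
      _ = L * ‖d‖ ^ 2 * t := by rw [norm_smul, Real.norm_of_nonneg ht.1]; ring
  have hB : ∀ t : ℝ, HasDerivAt (fun s : ℝ => L / 2 * ‖d‖ ^ 2 * s ^ 2) (L * ‖d‖ ^ 2 * t) t :=
    fun t => ((hasDerivAt_pow 2 t).const_mul (L / 2 * ‖d‖ ^ 2)).congr_deriv (by push_cast; ring)
  have := image_norm_le_of_norm_deriv_right_le_deriv_boundary
    (fun t _ => (hline t).continuousAt.continuousWithinAt) (fun t _ => (hline t).hasDerivWithinAt)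
    (by simp) hB hbound (right_mem_Icc.2 zero_le_one)
  simpa using this

theorem gradient_eq_smul_sub_of_forall_add_sq_le {g₀ y : E} (hΦ : HasGradientAt Φ g₀ y)
    (β : ℝ) (c : E) (hmin : ∀ u, Φ y + β / 2 * ‖y - c‖ ^ 2 ≤ Φ u + β / 2 * ‖u - c‖ ^ 2) :
    g₀ = β • (c - y) := by
  obtain ⟨v, hv⟩ : ∃ v, v = g₀ - β • (c - y) := ⟨_, rfl⟩
  have hpath : HasDerivAt (fun t : ℝ => y + t • v) v 0 := by
    simpa using ((hasDerivAt_id (0 : ℝ)).smul_const v).const_add y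
  have hderiv : HasDerivAt (fun t : ℝ => Φ (y + t • v) + β / 2 * ‖y + t • v - c‖ ^ 2)
      (‖v‖ ^ 2) 0 := by
    refine ((hΦ.hasFDerivAt.comp_hasDerivAt_of_eq 0 hpath (by simp)).add
      (((hpath.sub_const c).norm_sq).const_mul (β / 2))).congr_deriv ?_
    rw [zero_smul, add_zero, toDual_apply_apply, ← real_inner_self_eq_norm_sq]
    nth_rw 3 [hv]
    simp only [inner_sub_left, real_inner_smul_left]
    ring
  have hmin0 : IsLocalMin (fun t : ℝ => Φ (y + t • v) + β / 2 * ‖y + t • v - c‖ ^ 2) 0 :=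
    Eventually.of_forall fun t => by simpa using hmin (y + t • v)
  have := hmin0.hasDerivAt_eq_zero hderiv
  simpa [hv, sub_eq_zero] using this

theorem add_sq_norm_le_of_gradient_eq_smul_sub (hΦ : ∀ x, HasGradientAt Φ (g x) x)
    (hg : ∀ x y, ‖g x - g y‖ ≤ L * ‖x - y‖) {β : ℝ} {c y : E} (hy : g y = β • (c - y)) (u : E) :
    Φ y + β / 2 * ‖y - c‖ ^ 2 + (β - L) / 2 * ‖u - y‖ ^ 2 ≤ Φ u + β / 2 * ‖u - c‖ ^ 2 := by
  have hdesc := (abs_le.1 (abs_sub_sub_inner_le_of_lipschitz_gradient hΦ hg y u)).1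
  have hsq : ‖u - c‖ ^ 2 = ‖u - y‖ ^ 2 + 2 * ⟪u - y, y - c⟫ + ‖y - c‖ ^ 2 := by
    rw [← norm_add_sq_real, sub_add_sub_cancel]
  have hin : ⟪g y, u - y⟫ = -β * ⟪u - y, y - c⟫ := by
    rw [hy, real_inner_smul_left, ← neg_sub y c, inner_neg_left, real_inner_comm]
    ring
  rw [hsq]
  linarith

theorem augLagrangian_add_le_of_gradient_eq (hΦ : ∀ x, HasGradientAt Φ (g x) x)
    (hg : ∀ x y, ‖g x - g y‖ ≤ L * ‖x - y‖) {β : ℝ} (hβ : β ≠ 0) {x y' z : E}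
    (hy' : g y' = z + β • (x - y')) (y : E) :
    augLagrangian Φ β x y' z + (β - L) / 2 * ‖y - y'‖ ^ 2 ≤ augLagrangian Φ β x y z := by
  have := add_sq_norm_le_of_gradient_eq_smul_sub hΦ hg
    (hy'.trans (smul_add_inv_smul_sub hβ).symm) y
  rw [augLagrangian_eq hβ, augLagrangian_eq hβ]
  simp only [sub_sub] at this ⊢
  linarith

theorem le_augLagrangian (hΦ : ∀ x, HasGradientAt Φ (g x) x)
    (hg : ∀ x y, ‖g x - g y‖ ≤ L * ‖x - y‖) {β : ℝ} (hLβ : L ≤ β) (x y : E) :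
    Φ x ≤ augLagrangian Φ β x y (g y) := by
  have hdesc := (abs_le.1 (abs_sub_sub_inner_le_of_lipschitz_gradient hΦ hg y x)).2
  have : L / 2 * ‖x - y‖ ^ 2 ≤ β / 2 * ‖x - y‖ ^ 2 := by gcongr
  rw [augLagrangian]
  linarith

end LipschitzGradient

theorem summable_of_succ_add_le {V a : ℕ → ℝ} {m : ℝ} (ha : ∀ k, 0 ≤ a k)
    (hV : ∀ k, V (k + 1) + a k ≤ V k) (hm : ∀ k, m ≤ V k) : Summable a :=
  summable_of_sum_range_le ha fun N => calc
    ∑ i ∈ range N, a i ≤ ∑ i ∈ range N, (V i - V (i + 1)) :=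
      sum_le_sum fun i _ => by linarith [hV i]
    _ = V 0 - V N := sum_range_sub' V N
    _ ≤ V 0 - m := by linarith [hm N]

theorem ratio_nonneg {n : ℕ} (v : EuclideanSpace ℝ (Fin n)) : 0 ≤ ratio v := by
  unfold ratio
  split_ifs
  · exact zero_le_one
  · exact div_nonneg (sum_nonneg fun i _ => abs_nonneg _) (norm_nonneg _)

def admmLyapunov {n : ℕ} (Φ : EuclideanSpace ℝ (Fin n) → ℝ) (β γ : ℝ)
    (x y z : ℕ → EuclideanSpace ℝ (Fin n)) (k : ℕ) : ℝ :=
  ratio (x (k + 1)) + γ⁻¹ * augLagrangian Φ β (x (k + 1)) (y (k + 1)) (z (k + 1))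

namespace ADMMpSeq
variable {n : ℕ} {Φ : EuclideanSpace ℝ (Fin n) → ℝ}
  {g : EuclideanSpace ℝ (Fin n) → EuclideanSpace ℝ (Fin n)} {L β γ : ℝ}
  {X : Set (EuclideanSpace ℝ (Fin n))} {x y z : ℕ → EuclideanSpace ℝ (Fin n)}

theorem gradient_eq (h : ADMMpSeq β γ X Φ x y z) (hΦ : ∀ x, HasGradientAt Φ (g x) x)
    (hβ : β ≠ 0) (k : ℕ) : g (y (k + 1)) = z (k + 1) := by
  have := gradient_eq_smul_sub_of_forall_add_sq_le (hΦ _) β (x (k + 1) + β⁻¹ • z k)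
    fun u => by simpa only [sub_sub] using (h k).2.1 u
  rw [this, (h k).2.2, smul_add_inv_smul_sub hβ]

theorem admmLyapunov_succ_add_le (h : ADMMpSeq β γ X Φ x y z)
    (hΦ : ∀ x, HasGradientAt Φ (g x) x) (hg : ∀ x y, ‖g x - g y‖ ≤ L * ‖x - y‖) (hβ : 0 < β)
    (hγ : 0 ≤ γ) (k : ℕ) :
    admmLyapunov Φ β γ x y z (k + 1) +
        γ⁻¹ * ((β - L) / 2 - L ^ 2 / β) * ‖y (k + 1) - y (k + 2)‖ ^ 2 ≤
      admmLyapunov Φ β γ x y z k := by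
  have hz := (h (k + 1)).2.2
  have hx := add_inv_mul_augLagrangian_le (Φ := Φ) hβ.ne' ((h (k + 1)).1.2 _ (h k).1.1)
  have hy := augLagrangian_add_le_of_gradient_eq hΦ hg hβ.ne'
    (by rw [h.gradient_eq hΦ hβ.ne' (k + 1), hz]) (y (k + 1))
  have hdual : β * ‖x (k + 2) - y (k + 2)‖ ^ 2 ≤ L ^ 2 / β * ‖y (k + 1) - y (k + 2)‖ ^ 2 := by
    have hlip : β * ‖x (k + 2) - y (k + 2)‖ ≤ L * ‖y (k + 1) - y (k + 2)‖ := by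
      have hΔz : β • (x (k + 2) - y (k + 2)) = g (y (k + 2)) - g (y (k + 1)) := by
        rw [h.gradient_eq hΦ hβ.ne', h.gradient_eq hΦ hβ.ne', hz, add_sub_cancel_left]
      have := hg (y (k + 2)) (y (k + 1))
      rwa [← hΔz, norm_smul, Real.norm_of_nonneg hβ.le, norm_sub_rev (y (k + 2))] at this
    rw [div_mul_eq_mul_div, le_div_iff₀ hβ]
    nlinarith [pow_le_pow_left₀ (by positivity) hlip 2]
  have hyz : augLagrangian Φ β (x (k + 2)) (y (k + 2)) (z (k + 2)) +
      ((β - L) / 2 - L ^ 2 / β) * ‖y (k + 1) - y (k + 2)‖ ^ 2 ≤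
      augLagrangian Φ β (x (k + 2)) (y (k + 1)) (z (k + 1)) := by
    rw [hz, augLagrangian_add_smul_sub]
    linarith
  have := mul_le_mul_of_nonneg_left hyz (inv_nonneg.2 hγ)
  simp only [admmLyapunov, Nat.add_assoc, Nat.reduceAdd]
  linarith

theorem le_admmLyapunov (h : ADMMpSeq β γ X Φ x y z) (hΦ : ∀ x, HasGradientAt Φ (g x) x)
    (hg : ∀ x y, ‖g x - g y‖ ≤ L * ‖x - y‖) (hβ : 0 < β) (hLβ : L ≤ β) (hγ : 0 ≤ γ) {m : ℝ}
    (hm : ∀ u, m ≤ Φ u) (k : ℕ) : γ⁻¹ * m ≤ admmLyapunov Φ β γ x y z k := by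
  have := mul_le_mul_of_nonneg_left
    ((hm _).trans (le_augLagrangian hΦ hg hLβ (x (k + 1)) (y (k + 1)))) (inv_nonneg.2 hγ)
  rw [admmLyapunov, ← h.gradient_eq hΦ hβ.ne']
  linarith [ratio_nonneg (x (k + 1))]

end ADMMpSeq

theorem stmt12_general {n : ℕ} (Φ : EuclideanSpace ℝ (Fin n) → ℝ)
    (gΦ : EuclideanSpace ℝ (Fin n) → EuclideanSpace ℝ (Fin n))
    (hdiff : ∀ x, HasGradientAt Φ (gΦ x) x)
    (hbdd : BddBelow (Set.range Φ))
    (L : ℝ) (hL : 0 ≤ L)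
    (hlip : ∀ x y, ‖gΦ x - gΦ y‖ ≤ L * ‖x - y‖)
    (γ β : ℝ) (hγ : 0 < γ) (hβ : 2 * L < β)
    (X : Set (EuclideanSpace ℝ (Fin n)))
    (x y z : ℕ → EuclideanSpace ℝ (Fin n))
    (hADMM : ADMMpSeq β γ X Φ x y z) :
    Filter.Tendsto (fun k => ‖y k - y (k + 1)‖) Filter.atTop (nhds 0) := by
  have hβ0 : 0 < β := by linarith
  have hc : 0 < γ⁻¹ * ((β - L) / 2 - L ^ 2 / β) := by
    refine mul_pos (inv_pos.2 hγ) ?_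
    rw [sub_pos, div_lt_div_iff₀ hβ0 two_pos]
    nlinarith
  obtain ⟨m, hm⟩ := hbdd
  have hsum := summable_of_succ_add_le
    (fun k => mul_nonneg hc.le (sq_nonneg ‖y (k + 1) - y (k + 2)‖))
    (hADMM.admmLyapunov_succ_add_le hdiff hlip hβ0 hγ.le)
    (hADMM.le_admmLyapunov hdiff hlip hβ0 (by linarith) hγ.le fun u => hm (mem_range_self u))
  have hsq := ((summable_mul_left_iff hc.ne').1 hsum).tendsto_atTop_zero
  rw [← tendsto_add_atTop_iff_nat 1]
  simpa [Real.sqrt_sq (norm_nonneg _)] using hsq.sqrt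

theorem stmt12 {n : ℕ} (Φ : EuclideanSpace ℝ (Fin n) → ℝ)
    (gΦ : EuclideanSpace ℝ (Fin n) → EuclideanSpace ℝ (Fin n))
    (hdiff : ∀ x, HasGradientAt Φ (gΦ x) x)
    (hbdd : BddBelow (Set.range Φ))
    (L : ℝ) (hL : 0 ≤ L)
    (hlip : ∀ x y, ‖gΦ x - gΦ y‖ ≤ L * ‖x - y‖)
    (γ β : ℝ) (hγ : 0 < γ) (hβ : 2 * L < β)
    (X : Set (EuclideanSpace ℝ (Fin n)))
    (hX : X = Set.univ ∨ X = {x : EuclideanSpace ℝ (Fin n) | ∀ i, 0 ≤ x i})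
    (x y z : ℕ → EuclideanSpace ℝ (Fin n))
    (hADMM : ADMMpSeq β γ X Φ x y z) :
    Filter.Tendsto (fun k => ‖y k - y (k + 1)‖) Filter.atTop (nhds 0) :=
  stmt12_general Φ gΦ hdiff hbdd L hL hlip γ β hγ hβ X x y z hADMM
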